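/- arXiv:1905.10506 — 3 statements merged into one kernel-verified Lean document; each statement's English description precedes it below -/
import Mathlib

section
/- Let S be a finite state space, μ a distribution on S with μ(s) > 0, K a symmetric kernel on S, P_π the transition matrix of policy π, γ ∈ (0,1), and V^π the fixed point of the Bellman operator B_π. Define d_{π,μ}(s,s') = μ(s) P_π(s'|s) and the dual kernel K*(s', s̄') = ∑_{s,s̄} d*(s|s') d*(s̄|s̄') [K(s',s̄') + γ² K(s,s̄) − γ(K(s',s̄) + K(s,s̄'))] where d*(s|s') = P_π(s'|s) μ(s) / μ(s') (assuming μ(s') > 0 where needed and that μ is the stationary distribution of P_π so the marginals match). Then the kernel loss L_K(V) = ∑_{s,s̄} μ(s) μ(s̄) K(s,s̄) (B_π V − V)(s) (B_π V − V)(s̄) satisfies L_K(V) = ∑_{s',s̄'} μ(s') μ(s̄') K*(s',s̄') (V − V^π)(s') (V − V^π)(s̄'). -/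
private lemma quad_swap12 {S : Type*} [Fintype S] (g : S → S → S → S → ℝ) :
    (∑ a, ∑ b, ∑ c, ∑ d, g a b c d) = ∑ a, ∑ b, ∑ c, ∑ d, g b a c d :=
  Finset.sum_comm

private lemma quad_swap34 {S : Type*} [Fintype S] (g : S → S → S → S → ℝ) :
    (∑ a, ∑ b, ∑ c, ∑ d, g a b c d) = ∑ a, ∑ b, ∑ c, ∑ d, g a b d c :=
  Finset.sum_congr rfl fun a _ => Finset.sum_congr rfl fun b _ => Finset.sum_comm

/-- Theorem 3.2 (finite-state version): the kernel Bellman loss equals a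
dual-kernel quadratic form of the value error `V − V^π`. -/
theorem kernel_loss_eq_dual_kernel_norm
    {S : Type*} [Fintype S]
    (μ : S → ℝ) (hμpos : ∀ s, 0 < μ s) (hμ1 : ∑ s, μ s = 1)
    (K : S → S → ℝ) (hKsym : ∀ s s', K s s' = K s' s)
    (P : S → S → ℝ) (hP0 : ∀ s s', 0 ≤ P s s') (hP1 : ∀ s, ∑ s', P s s' = 1)
    (hstat : ∀ s', ∑ s, μ s * P s s' = μ s')
    (r : S → ℝ) (γ : ℝ) (hγ : γ ∈ Set.Ioo (0 : ℝ) 1)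
    (B : (S → ℝ) → (S → ℝ))
    (hB : B = fun V s => r s + γ * ∑ s', P s s' * V s')
    (Vpi : S → ℝ) (hVpi : B Vpi = Vpi)
    (dstar : S → S → ℝ) (hdstar : dstar = fun s s' => P s s' * μ s / μ s')
    (Kstar : S → S → ℝ)
    (hKstar : Kstar = fun s' sb' => ∑ s, ∑ sb, dstar s s' * dstar sb sb' *
        (K s' sb' + γ ^ 2 * K s sb - γ * (K s' sb + K s sb')))
    (V : S → ℝ) :
    (∑ s, ∑ sb, μ s * μ sb * K s sb * (B V s - V s) * (B V sb - V sb))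
      = ∑ s', ∑ sb', μ s' * μ sb' * Kstar s' sb' * (V s' - Vpi s') * (V sb' - Vpi sb') := by
  subst hKstar hdstar hB
  set e : S → ℝ := fun s => V s - Vpi s with he
  set f : S → S → ℝ := fun a b => γ * (μ a * P a b) * e b - (μ b * P b a) * e a with hf
  have hVpi' : ∀ s, Vpi s = r s + γ * ∑ s', P s s' * Vpi s' := by
    intro s; conv_lhs => rw [← hVpi]
  -- Bellman residual in terms of e
  have hBe : ∀ a, (fun V s => r s + γ * ∑ s', P s s' * V s') V a - V a
      = γ * (∑ b, P a b * e b) - e a := by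
    intro a
    have h1 : (∑ b, P a b * e b) = (∑ b, P a b * V b) - ∑ b, P a b * Vpi b := by
      rw [← Finset.sum_sub_distrib]
      exact Finset.sum_congr rfl fun b _ => by simp [he]; ring
    simp only [he, h1]
    rw [hVpi' a]
    simp only [mul_sub, Finset.sum_sub_distrib]
    ring
  have hF : ∀ a, μ a * (γ * (∑ b, P a b * e b) - e a) = ∑ b, f a b := by
    intro a
    have h1 : (∑ b, f a b) = γ * μ a * (∑ b, P a b * e b) - μ a * e a := by
      rw [hf]
      simp only []
      rw [Finset.sum_sub_distrib]
      congr 1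
      · rw [Finset.mul_sum]
        exact Finset.sum_congr rfl fun b _ => by ring
      · rw [← Finset.sum_mul, hstat a]
    rw [h1]; ring
  -- LHS as a quadruple sum
  have hL : (∑ s, ∑ sb, μ s * μ sb * K s sb *
        ((fun V s => r s + γ * ∑ s', P s s' * V s') V s - V s) *
        ((fun V s => r s + γ * ∑ s', P s s' * V s') V sb - V sb))
      = ∑ a, ∑ b, ∑ c, ∑ d, K a c * f a b * f c d := by
    have step : ∀ a c, μ a * μ c * K a c *
        ((fun V s => r s + γ * ∑ s', P s s' * V s') V a - V a) *
        ((fun V s => r s + γ * ∑ s', P s s' * V s') V c - V c)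
        = ∑ b, ∑ d, K a c * f a b * f c d := by
      intro a c
      rw [hBe a, hBe c]
      have h2 : μ a * μ c * K a c * (γ * (∑ b, P a b * e b) - e a) *
          (γ * (∑ d, P c d * e d) - e c)
          = K a c * (μ a * (γ * (∑ b, P a b * e b) - e a)) *
            (μ c * (γ * (∑ d, P c d * e d) - e c)) := by ring
      rw [h2, hF a, hF c, mul_assoc, Finset.sum_mul_sum]
      simp only [Finset.mul_sum]
      exact Finset.sum_congr rfl fun b _ => Finset.sum_congr rfl fun d _ => by ring
    calc (∑ s, ∑ sb, μ s * μ sb * K s sb *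
        ((fun V s => r s + γ * ∑ s', P s s' * V s') V s - V s) *
        ((fun V s => r s + γ * ∑ s', P s s' * V s') V sb - V sb))
        = ∑ a, ∑ c, ∑ b, ∑ d, K a c * f a b * f c d :=
          Finset.sum_congr rfl fun a _ => Finset.sum_congr rfl fun c _ => step a c
      _ = ∑ a, ∑ b, ∑ c, ∑ d, K a c * f a b * f c d :=
          Finset.sum_congr rfl fun a _ => Finset.sum_comm
  -- RHS as a quadruple sum
  have hR : (∑ s', ∑ sb', μ s' * μ sb' *
        ((fun s' sb' => ∑ s, ∑ sb, (fun s s' => P s s' * μ s / μ s') s s' *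
          (fun s s' => P s s' * μ s / μ s') sb sb' *
          (K s' sb' + γ ^ 2 * K s sb - γ * (K s' sb + K s sb'))) s' sb') *
        (V s' - Vpi s') * (V sb' - Vpi sb'))
      = ∑ a, ∑ b, ∑ c, ∑ d, (μ a * P a b) * (μ c * P c d) *
          (K b d + γ ^ 2 * K a c - γ * (K b c + K a d)) * e b * e d := by
    have step : ∀ b d, μ b * μ d *
        (∑ a, ∑ c, (P a b * μ a / μ b) * (P c d * μ c / μ d) *
          (K b d + γ ^ 2 * K a c - γ * (K b c + K a d))) *
        (V b - Vpi b) * (V d - Vpi d)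
        = ∑ a, ∑ c, (μ a * P a b) * (μ c * P c d) *
          (K b d + γ ^ 2 * K a c - γ * (K b c + K a d)) * e b * e d := by
      intro b d
      have hb := (hμpos b).ne'
      have hd := (hμpos d).ne'
      have key : ∀ x y X : ℝ, μ b * μ d * (x / μ b * (y / μ d) * X) = x * y * X := by
        intro x y X
        field_simp
      simp only [Finset.mul_sum, Finset.sum_mul]
      refine Finset.sum_congr rfl fun a _ => Finset.sum_congr rfl fun c _ => ?_
      simp only [he]
      rw [key]
      ring
    calc (∑ s', ∑ sb', μ s' * μ sb' *
        ((fun s' sb' => ∑ s, ∑ sb, (fun s s' => P s s' * μ s / μ s') s s' *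
          (fun s s' => P s s' * μ s / μ s') sb sb' *
          (K s' sb' + γ ^ 2 * K s sb - γ * (K s' sb + K s sb'))) s' sb') *
        (V s' - Vpi s') * (V sb' - Vpi sb'))
        = ∑ b, ∑ d, ∑ a, ∑ c, (μ a * P a b) * (μ c * P c d) *
            (K b d + γ ^ 2 * K a c - γ * (K b c + K a d)) * e b * e d :=
          Finset.sum_congr rfl fun b _ => Finset.sum_congr rfl fun d _ => step b d
      _ = ∑ b, ∑ a, ∑ d, ∑ c, (μ a * P a b) * (μ c * P c d) *
            (K b d + γ ^ 2 * K a c - γ * (K b c + K a d)) * e b * e d :=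
          Finset.sum_congr rfl fun b _ => Finset.sum_comm
      _ = ∑ a, ∑ b, ∑ d, ∑ c, (μ a * P a b) * (μ c * P c d) *
            (K b d + γ ^ 2 * K a c - γ * (K b c + K a d)) * e b * e d :=
          Finset.sum_comm
      _ = ∑ a, ∑ b, ∑ c, ∑ d, (μ a * P a b) * (μ c * P c d) *
            (K b d + γ ^ 2 * K a c - γ * (K b c + K a d)) * e b * e d :=
          Finset.sum_congr rfl fun a _ => Finset.sum_congr rfl fun b _ => Finset.sum_comm
  rw [hL, hR]
  -- expand the product and match term by term after index swaps
  have expand : ∀ a b c d, K a c * f a b * f c d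
      = γ ^ 2 * K a c * (μ a * P a b) * (μ c * P c d) * e b * e d
        + (-(γ * K a c * (μ a * P a b) * (μ d * P d c) * e b * e c))
        + (-(γ * K a c * (μ b * P b a) * (μ c * P c d) * e a * e d))
        + K a c * (μ b * P b a) * (μ d * P d c) * e a * e c := by
    intro a b c d
    rw [hf]; simp only []; ring
  calc (∑ a, ∑ b, ∑ c, ∑ d, K a c * f a b * f c d)
      = (∑ a, ∑ b, ∑ c, ∑ d, γ ^ 2 * K a c * (μ a * P a b) * (μ c * P c d) * e b * e d)
        + (∑ a, ∑ b, ∑ c, ∑ d, -(γ * K a c * (μ a * P a b) * (μ d * P d c) * e b * e c))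
        + (∑ a, ∑ b, ∑ c, ∑ d, -(γ * K a c * (μ b * P b a) * (μ c * P c d) * e a * e d))
        + (∑ a, ∑ b, ∑ c, ∑ d, K a c * (μ b * P b a) * (μ d * P d c) * e a * e c) := by
        simp only [expand, Finset.sum_add_distrib]
    _ = (∑ a, ∑ b, ∑ c, ∑ d, γ ^ 2 * K a c * (μ a * P a b) * (μ c * P c d) * e b * e d)
        + (∑ a, ∑ b, ∑ c, ∑ d, -(γ * K a d * (μ a * P a b) * (μ c * P c d) * e b * e d))
        + (∑ a, ∑ b, ∑ c, ∑ d, -(γ * K b c * (μ a * P a b) * (μ c * P c d) * e b * e d))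
        + (∑ a, ∑ b, ∑ c, ∑ d, K b d * (μ a * P a b) * (μ c * P c d) * e b * e d) := by
        congr 1
        congr 1
        congr 1
        · exact quad_swap34 _
        · exact quad_swap12 _
        · rw [quad_swap12 (fun a b c d => K a c * (μ b * P b a) * (μ d * P d c) * e a * e c)]
          exact quad_swap34 _
    _ = ∑ a, ∑ b, ∑ c, ∑ d, (μ a * P a b) * (μ c * P c d) *
          (K b d + γ ^ 2 * K a c - γ * (K b c + K a d)) * e b * e d := by
        simp only [← Finset.sum_add_distrib]
        refine Finset.sum_congr rfl fun a _ => Finset.sum_congr rfl fun b _ =>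
          Finset.sum_congr rfl fun c _ => Finset.sum_congr rfl fun d _ => ?_
        ring
end

section
/- Let X, X' ∈ ℝ^{n×d}, r ∈ ℝ^n, γ ∈ ℝ, and Z = X − γ X'. Assume X^T Z and Z^T X X^T Z are invertible. Define θ_TD = (X^T Z)^{-1} X^T r and θ_K = (Z^T X X^T Z)^{-1} Z^T X X^T r. Then θ_K = θ_TD. -/
open Matrix

/-- Corollary 3.5 (linear-algebra form): the minimizer of the empirical kernel
loss with linear features coincides with the TD fixed-point solution. -/
theorem kernel_loss_solution_eq_td_solution
    {n d : ℕ} (X X' : Matrix (Fin n) (Fin d) ℝ) (r : Fin n → ℝ) (γ : ℝ)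
    (Z : Matrix (Fin n) (Fin d) ℝ) (hZ : Z = X - γ • X')
    (h1 : IsUnit (Xᵀ * Z).det)
    (h2 : IsUnit (Zᵀ * X * Xᵀ * Z).det) :
    (Zᵀ * X * Xᵀ * Z)⁻¹ *ᵥ ((Zᵀ * X * Xᵀ) *ᵥ r)
      = (Xᵀ * Z)⁻¹ *ᵥ (Xᵀ *ᵥ r) := by
  set A := Xᵀ * Z with hA
  have hZX : Zᵀ * X = Aᵀ := by rw [hA, transpose_mul, transpose_transpose]
  have hAT : IsUnit Aᵀ.det := by rwa [det_transpose]
  have hprod : Zᵀ * X * Xᵀ * Z = Aᵀ * A := by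
    rw [hZX, hA, Matrix.mul_assoc]
  rw [hprod, hZX, Matrix.mul_inv_rev, ← Matrix.mulVec_mulVec,
    Matrix.mulVec_mulVec, Matrix.mulVec_mulVec]
  rw [Matrix.mul_assoc, ← Matrix.mul_assoc Aᵀ⁻¹, Matrix.nonsing_inv_mul _ hAT,
    Matrix.one_mul]
  rw [← Matrix.mulVec_mulVec]
end

section
/- Let S, A be finite, γ ∈ (0,1), λ > 0, and let V*_λ be the unique fixed point of the smoothed Bellman operator B_λ and π*_λ(a|s) the corresponding softmax policy. Then the pair (V, π) = (V*_λ, π*_λ) satisfies, for all (s,a) with π(a|s) > 0: V(s) = R(s,a) + γ ∑_{s'} P(s'|s,a) V(s') − λ log π(a|s). Conversely, if a pair (V, π) with π(a|s) > 0 for all (s,a) satisfies this path consistency condition for all (s,a), then V = V*_λ and π = π*_λ. -/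
private lemma lse_lip {A : Type*} [Fintype A] [Nonempty A] {lam c : ℝ} (hlam : 0 < lam)
    (x y : A → ℝ) (h : ∀ a, x a ≤ y a + c) :
    lam * Real.log (∑ a, Real.exp (x a / lam)) ≤
      lam * Real.log (∑ a, Real.exp (y a / lam)) + c := by
  have hy : (0:ℝ) < ∑ a, Real.exp (y a / lam) :=
    Finset.sum_pos (fun a _ => Real.exp_pos _) Finset.univ_nonempty
  have hx : (0:ℝ) < ∑ a, Real.exp (x a / lam) :=
    Finset.sum_pos (fun a _ => Real.exp_pos _) Finset.univ_nonempty
  have hle : ∑ a, Real.exp (x a / lam) ≤ (∑ a, Real.exp (y a / lam)) * Real.exp (c / lam) := by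
    rw [Finset.sum_mul]
    apply Finset.sum_le_sum
    intro a _
    rw [← Real.exp_add, ← add_div]
    exact Real.exp_le_exp.2 (by gcongr; exact h a)
  have hlog : Real.log (∑ a, Real.exp (x a / lam)) ≤
      Real.log (∑ a, Real.exp (y a / lam)) + c / lam := by
    calc Real.log (∑ a, Real.exp (x a / lam))
        ≤ Real.log ((∑ a, Real.exp (y a / lam)) * Real.exp (c / lam)) := Real.log_le_log hx hle
      _ = Real.log (∑ a, Real.exp (y a / lam)) + c / lam := by
          rw [Real.log_mul (ne_of_gt hy) (ne_of_gt (Real.exp_pos _)), Real.log_exp]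
  have := mul_le_mul_of_nonneg_left hlog hlam.le
  have hc : lam * (c / lam) = c := by field_simp
  nlinarith [hc]

/-- Path consistency characterization: the fixed point of the smoothed Bellman
operator together with its softmax policy satisfies path consistency, and
conversely any positive policy/value pair satisfying path consistency equals
`(V*_λ, π*_λ)`. -/
theorem path_consistency_characterization
    {S A : Type*} [Fintype S] [Fintype A] [Nonempty A]
    (γ lam : ℝ) (hγ : γ ∈ Set.Ioo (0 : ℝ) 1) (hlam : 0 < lam)
    (R : S → A → ℝ) (P : S → A → S → ℝ)
    (hP0 : ∀ s a s', 0 ≤ P s a s') (hP1 : ∀ s a, ∑ s', P s a s' = 1)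
    (B : (S → ℝ) → (S → ℝ))
    (hB : B = fun V s => lam * Real.log (∑ a,
        Real.exp ((R s a + γ * ∑ s', P s a s' * V s') / lam)))
    (Vstar : S → ℝ) (hVstar : B Vstar = Vstar)
    (pstar : S → A → ℝ)
    (hpstar : pstar = fun s a =>
        Real.exp ((R s a + γ * ∑ s', P s a s' * Vstar s') / lam) /
          ∑ a', Real.exp ((R s a' + γ * ∑ s', P s a' s' * Vstar s') / lam)) :
    (∀ s a, 0 < pstar s a →
        Vstar s = R s a + γ * (∑ s', P s a s' * Vstar s')
          - lam * Real.log (pstar s a))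
    ∧ (∀ (V : S → ℝ) (p : S → A → ℝ),
        (∀ s a, 0 < p s a) → (∀ s, ∑ a, p s a = 1) →
        (∀ s a, V s = R s a + γ * (∑ s', P s a s' * V s')
            - lam * Real.log (p s a)) →
        V = Vstar ∧ p = pstar) := by
  obtain ⟨hγ0, hγ1⟩ := hγ
  subst hB hpstar
  have hlamne : lam ≠ 0 := ne_of_gt hlam
  have hfix : ∀ s, lam * Real.log (∑ a,
      Real.exp ((R s a + γ * ∑ s', P s a s' * Vstar s') / lam)) = Vstar s :=
    fun s => congrFun hVstar s
  have hZpos : ∀ s, (0:ℝ) < ∑ a', Real.exp ((R s a' + γ * ∑ s', P s a' s' * Vstar s') / lam) :=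
    fun s => Finset.sum_pos (fun a _ => Real.exp_pos _) Finset.univ_nonempty
  have hZ : ∀ s, (∑ a', Real.exp ((R s a' + γ * ∑ s', P s a' s' * Vstar s') / lam))
      = Real.exp (Vstar s / lam) := by
    intro s
    have h1 : Real.log (∑ a', Real.exp ((R s a' + γ * ∑ s', P s a' s' * Vstar s') / lam))
        = Vstar s / lam := by
      field_simp
      linarith [hfix s]
    rw [← h1, Real.exp_log (hZpos s)]
  constructor
  · intro s a _
    have hlogp : Real.log (Real.exp ((R s a + γ * ∑ s', P s a s' * Vstar s') / lam) /
        ∑ a', Real.exp ((R s a' + γ * ∑ s', P s a' s' * Vstar s') / lam))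
        = (R s a + γ * ∑ s', P s a s' * Vstar s') / lam
          - Real.log (∑ a', Real.exp ((R s a' + γ * ∑ s', P s a' s' * Vstar s') / lam)) := by
      rw [Real.log_div (ne_of_gt (Real.exp_pos _)) (ne_of_gt (hZpos s)), Real.log_exp]
    simp only [hlogp]
    have h1 := hfix s
    have h2 : lam * ((R s a + γ * ∑ s', P s a s' * Vstar s') / lam)
        = R s a + γ * ∑ s', P s a s' * Vstar s' := by field_simp
    nlinarith [h1, h2]
  · intro V p hp hp1 hpc
    have hpeq : ∀ s a, p s a
        = Real.exp (((R s a + γ * ∑ s', P s a s' * V s') - V s) / lam) := by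
      intro s a
      have h1 : Real.log (p s a) = ((R s a + γ * ∑ s', P s a s' * V s') - V s) / lam := by
        have h0 := hpc s a
        field_simp
        linarith
      rw [← h1, Real.exp_log (hp s a)]
    have hBV : ∀ s, lam * Real.log (∑ a,
        Real.exp ((R s a + γ * ∑ s', P s a s' * V s') / lam)) = V s := by
      intro s
      have hsum : (∑ a, Real.exp ((R s a + γ * ∑ s', P s a s' * V s') / lam))
          = Real.exp (V s / lam) := by
        have h1 := hp1 s
        have h2 : ∀ a, Real.exp (((R s a + γ * ∑ s', P s a s' * V s') - V s) / lam)
            = Real.exp ((R s a + γ * ∑ s', P s a s' * V s') / lam) * Real.exp (-(V s / lam)) := by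
          intro a
          rw [← Real.exp_add]
          congr 1
          ring
        rw [Finset.sum_congr rfl (fun a _ => hpeq s a)] at h1
        rw [Finset.sum_congr rfl (fun a _ => h2 a), ← Finset.sum_mul] at h1
        rw [Real.exp_neg] at h1
        exact (mul_inv_eq_one₀ (ne_of_gt (Real.exp_pos _))).1 h1
      rw [hsum, Real.log_exp]
      field_simp
    have hVeq : V = Vstar := by
      cases isEmpty_or_nonempty S with
      | inl hS => exact funext fun s => (hS.false s).elim
      | inr hS =>
        set D : S → ℝ := fun s => |V s - Vstar s| with hD
        set M : ℝ := Finset.univ.sup' Finset.univ_nonempty D with hM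
        have hMle : ∀ s, D s ≤ M := fun s => Finset.le_sup' D (Finset.mem_univ s)
        obtain ⟨s0, _, hs0⟩ := Finset.exists_mem_eq_sup' Finset.univ_nonempty D
        have hM0 : 0 ≤ M := le_trans (abs_nonneg _) (hMle (Classical.arbitrary S))
        have hbound : ∀ s a, |(R s a + γ * ∑ s', P s a s' * V s')
            - (R s a + γ * ∑ s', P s a s' * Vstar s')| ≤ γ * M := by
          intro s a
          have h1 : (R s a + γ * ∑ s', P s a s' * V s')
              - (R s a + γ * ∑ s', P s a s' * Vstar s')
              = γ * ∑ s', P s a s' * (V s' - Vstar s') := by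
            simp only [mul_sub, Finset.sum_sub_distrib, Finset.mul_sum]
            ring
          rw [h1, abs_mul, abs_of_pos hγ0]
          have h2 : |∑ s', P s a s' * (V s' - Vstar s')| ≤ M := by
            calc |∑ s', P s a s' * (V s' - Vstar s')|
                ≤ ∑ s', |P s a s' * (V s' - Vstar s')| := Finset.abs_sum_le_sum_abs _ _
              _ ≤ ∑ s', P s a s' * M := by
                  apply Finset.sum_le_sum
                  intro s' _
                  rw [abs_mul, abs_of_nonneg (hP0 s a s')]
                  exact mul_le_mul_of_nonneg_left (hMle s') (hP0 s a s')
              _ = M := by rw [← Finset.sum_mul, hP1, one_mul]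
          exact mul_le_mul_of_nonneg_left h2 hγ0.le
        have hcontr : D s0 ≤ γ * M := by
          have hle1 : V s0 - Vstar s0 ≤ γ * M := by
            rw [← hBV s0, ← hfix s0]
            have hl := lse_lip (A := A) (c := γ * M) hlam
              (fun a => R s0 a + γ * ∑ s', P s0 a s' * V s')
              (fun a => R s0 a + γ * ∑ s', P s0 a s' * Vstar s')
              (fun a => by linarith [(abs_le.1 (hbound s0 a)).2])
            linarith [hl]
          have hle2 : Vstar s0 - V s0 ≤ γ * M := by
            rw [← hBV s0, ← hfix s0]
            have hl := lse_lip (A := A) (c := γ * M) hlam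
              (fun a => R s0 a + γ * ∑ s', P s0 a s' * Vstar s')
              (fun a => R s0 a + γ * ∑ s', P s0 a s' * V s')
              (fun a => by linarith [(abs_le.1 (hbound s0 a)).1])
            linarith [hl]
          exact abs_sub_le_iff.2 ⟨hle1, hle2⟩
        have hMneg : M ≤ 0 := by nlinarith [hs0 ▸ hcontr]
        funext s
        have hd0 : |V s - Vstar s| ≤ 0 := le_trans (hMle s) hMneg
        have hd : |V s - Vstar s| = 0 := le_antisymm hd0 (abs_nonneg _)
        linarith [sub_eq_zero.1 (abs_eq_zero.1 hd)]
    refine ⟨hVeq, ?_⟩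
    subst hVeq
    funext s a
    rw [hpeq s a, hZ s, ← Real.exp_sub, ← sub_div]
end
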